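/- arXiv:2605.07624 — 7 statements merged into one kernel-verified Lean document; each statement's English description precedes it below -/
import Mathlib

section
/- Let X, Y be random variables with joint distribution p_{X,Y} on finite alphabets 𝒳, 𝒴 such that the marginal p_Y is strictly positive, let 𝒜 be a finite nonempty action set, let g : 𝒳 × 𝒜 → ℝ be a gain function, and let φ, ψ, η : ℝ → ℝ be strictly increasing continuous bijections. Then η(V̂_{ψ,φ,g}(X|Y)) = V̂_{ψ∘η⁻¹, φ∘η⁻¹, η∘g}(X|Y), where η∘g denotes the gain function (x,a) ↦ η(g(x,a)). -/
/-- The generalized average g-posterior conditional vulnerability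
`V̂_{ψ,φ,g}(X|Y) := M_ψ[max_a M_φ[g(X,a) | Y]]` for a joint distribution `p` on `𝒳 × 𝒴`,
where `ψinv` (resp. `φinv`) denotes the inverse of `ψ` (resp. `φ`),
`p_Y(y) = Σ_x p(x,y)` and `p_{X|Y}(x|y) = p(x,y)/p_Y(y)`. -/
noncomputable def Vhat {𝒳 𝒴 𝒜 : Type*} [Fintype 𝒳] [Fintype 𝒴] [Fintype 𝒜] [Nonempty 𝒜]
    (p : 𝒳 → 𝒴 → ℝ) (ψ ψinv φ φinv : ℝ → ℝ) (g : 𝒳 → 𝒜 → ℝ) : ℝ :=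
  ψinv (∑ y, (∑ x, p x y) *
    ψ (Finset.univ.sup' Finset.univ_nonempty fun a =>
      φinv (∑ x, (p x y / ∑ x', p x' y) * φ (g x a))))

/-- For a joint distribution on finite alphabets with strictly positive
marginal `p_Y`, a finite nonempty action set, a gain function `g`, and strictly
increasing continuous bijections `φ, ψ, η : ℝ → ℝ`, one has
`η(V̂_{ψ,φ,g}(X|Y)) = V̂_{ψ∘η⁻¹, φ∘η⁻¹, η∘g}(X|Y)`. -/
theorem eta_Vhat_eq_Vhat_transformed {𝒳 𝒴 𝒜 : Type*}
    [Fintype 𝒳] [Fintype 𝒴] [Fintype 𝒜] [Nonempty 𝒳] [Nonempty 𝒴] [Nonempty 𝒜]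
    (p : 𝒳 → 𝒴 → ℝ) (hp0 : ∀ x y, 0 ≤ p x y) (hp1 : ∑ x, ∑ y, p x y = 1)
    (hpY : ∀ y, 0 < ∑ x, p x y)
    (g : 𝒳 → 𝒜 → ℝ) (φ ψ η : ℝ → ℝ)
    (hφ : StrictMono φ) (hφc : Continuous φ) (hφb : Function.Bijective φ)
    (hψ : StrictMono ψ) (hψc : Continuous ψ) (hψb : Function.Bijective ψ)
    (hη : StrictMono η) (hηc : Continuous η) (hηb : Function.Bijective η) :
    η (Vhat p ψ (Function.invFun ψ) φ (Function.invFun φ) g) =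
      Vhat p (ψ ∘ Function.invFun η) (η ∘ Function.invFun ψ)
        (φ ∘ Function.invFun η) (η ∘ Function.invFun φ)
        (fun x a => η (g x a)) := by
  have hηli : Function.LeftInverse (Function.invFun η) η :=
    Function.leftInverse_invFun hηb.injective
  have key : ∀ y : 𝒴,
      ψ (Function.invFun η (Finset.univ.sup' Finset.univ_nonempty fun a : 𝒜 =>
          η (Function.invFun φ (∑ x, (p x y / ∑ x', p x' y) *
            φ (Function.invFun η (η (g x a)))))))
      = ψ (Finset.univ.sup' Finset.univ_nonempty fun a : 𝒜 =>
          Function.invFun φ (∑ x, (p x y / ∑ x', p x' y) * φ (g x a))) := by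
    intro y
    congr 1
    have h1 : (fun a : 𝒜 => η (Function.invFun φ (∑ x, (p x y / ∑ x', p x' y) *
        φ (Function.invFun η (η (g x a))))))
        = η ∘ (fun a : 𝒜 => Function.invFun φ (∑ x, (p x y / ∑ x', p x' y) * φ (g x a))) := by
      funext a
      simp [hηli (g _ a)]
    rw [h1, ← Finset.comp_sup'_eq_sup'_comp _ η (fun a b => (hη.monotone.map_max)), hηli]
  simp only [Vhat, Function.comp_apply, key]
end

section
/- Let X, Y be random variables with joint distribution p_{X,Y} on finite alphabets 𝒳, 𝒴 such that the marginal p_X is strictly positive, let 𝒜 be a finite nonempty action set, let g : 𝒳 × 𝒜 → ℝ be a gain function, and let φ, ψ, η : ℝ → ℝ be strictly increasing continuous bijections. Then η(V_{φ,ψ,g}(X|Y)) = V_{φ∘η⁻¹, ψ∘η⁻¹, η∘g}(X|Y), where η∘g denotes the gain function (x,a) ↦ η(g(x,a)). -/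
/-- The generalized g-Bayes conditional vulnerability
`V_{φ,ψ,g}(X|Y) := max_{δ : 𝒴 → 𝒜} M_φ[M_ψ[g(X,δ(Y)) | X]]` for a joint distribution `p`
on `𝒳 × 𝒴`, where `φinv` (resp. `ψinv`) denotes the inverse of `φ` (resp. `ψ`),
`p_X(x) = Σ_y p(x,y)` and `p_{Y|X}(y|x) = p(x,y)/p_X(x)`. -/
noncomputable def VBayes {𝒳 𝒴 𝒜 : Type*} [Fintype 𝒳] [Fintype 𝒴] [DecidableEq 𝒴]
    [Fintype 𝒜] [Nonempty 𝒜]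
    (p : 𝒳 → 𝒴 → ℝ) (φ φinv ψ ψinv : ℝ → ℝ) (g : 𝒳 → 𝒜 → ℝ) : ℝ :=
  Finset.univ.sup' Finset.univ_nonempty fun δ : 𝒴 → 𝒜 =>
    φinv (∑ x, (∑ y, p x y) *
      φ (ψinv (∑ y, (p x y / ∑ y', p x y') * ψ (g x (δ y)))))

/-- For a joint distribution on finite alphabets with strictly positive
marginal `p_X`, a finite nonempty action set, a gain function `g`, and strictly
increasing continuous bijections `φ, ψ, η : ℝ → ℝ`, one has
`η(V_{φ,ψ,g}(X|Y)) = V_{φ∘η⁻¹, ψ∘η⁻¹, η∘g}(X|Y)`. -/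
theorem eta_VBayes_eq_VBayes_transformed {𝒳 𝒴 𝒜 : Type*}
    [Fintype 𝒳] [Fintype 𝒴] [DecidableEq 𝒴] [Fintype 𝒜]
    [Nonempty 𝒳] [Nonempty 𝒴] [Nonempty 𝒜]
    (p : 𝒳 → 𝒴 → ℝ) (hp0 : ∀ x y, 0 ≤ p x y) (hp1 : ∑ x, ∑ y, p x y = 1)
    (hpX : ∀ x, 0 < ∑ y, p x y)
    (g : 𝒳 → 𝒜 → ℝ) (φ ψ η : ℝ → ℝ)
    (hφ : StrictMono φ) (hφc : Continuous φ) (hφb : Function.Bijective φ)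
    (hψ : StrictMono ψ) (hψc : Continuous ψ) (hψb : Function.Bijective ψ)
    (hη : StrictMono η) (hηc : Continuous η) (hηb : Function.Bijective η) :
    η (VBayes p φ (Function.invFun φ) ψ (Function.invFun ψ) g) =
      VBayes p (φ ∘ Function.invFun η) (η ∘ Function.invFun φ)
        (ψ ∘ Function.invFun η) (η ∘ Function.invFun ψ)
        (fun x a => η (g x a)) := by
  have hηl : Function.LeftInverse (Function.invFun η) η :=
    Function.leftInverse_invFun hηb.injective
  unfold VBayes
  rw [Finset.comp_sup'_eq_sup'_comp _ η (fun a b => hη.monotone.map_max)]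
  refine Finset.sup'_congr _ rfl fun δ _ => ?_
  simp only [Function.comp_apply, hηl _]
end

section
/- Let 𝒳, 𝒴 be finite alphabets, let F : Δ_𝒳 → ℝ be continuous on the probability simplex Δ_𝒳, let η : ℝ → ℝ be strictly increasing and continuous, and let ψ : ℝ → ℝ be a strictly decreasing continuous bijection such that ψ∘F is convex on Δ_𝒳. Then the function η̃ : t ↦ η(ψ⁻¹(−t)) is strictly increasing, the function F̃ := −(ψ∘F) is continuous and concave on Δ_𝒳, and for every joint distribution p_{X,Y} on 𝒳 × 𝒴 with strictly positive marginal p_Y, the EPKNAVG conditional entropy η(M_ψ[F(p_{X|Y}(·|Y))]) equals the EAVG conditional entropy η̃(Σ_y p_Y(y)·F̃(p_{X|Y}(·|y))). -/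
open Function

theorem StrictAnti.invFun_of_surjective {α β : Type*} [LinearOrder α] [Nonempty α] [Preorder β]
    {f : α → β} (hf : StrictAnti f) (hs : Surjective f) : StrictAnti (invFun f) := by
  intro a b hab
  obtain ⟨x, rfl⟩ := hs a
  obtain ⟨y, rfl⟩ := hs b
  rw [leftInverse_invFun hf.injective, leftInverse_invFun hf.injective]
  exact hf.lt_iff_gt.mp hab

theorem epknavg_eq_eavg_of_strictAnti_general {𝒳 𝒴 : Type*} [Fintype 𝒳] [Fintype 𝒴]
    (F : (𝒳 → ℝ) → ℝ) (hF : ContinuousOn F (stdSimplex ℝ 𝒳))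
    (η : ℝ → ℝ) (hη : StrictMono η)
    (ψ : ℝ → ℝ) (hψ : StrictAnti ψ) (hψc : Continuous ψ) (hψb : Function.Bijective ψ)
    (hψF : ConvexOn ℝ (stdSimplex ℝ 𝒳) (ψ ∘ F)) :
    StrictMono (fun t => η (Function.invFun ψ (-t))) ∧
    ContinuousOn (fun q => -(ψ ∘ F) q) (stdSimplex ℝ 𝒳) ∧
    ConcaveOn ℝ (stdSimplex ℝ 𝒳) (fun q => -(ψ ∘ F) q) ∧
    ∀ p : 𝒳 → 𝒴 → ℝ, (∀ x y, 0 ≤ p x y) → (∑ x, ∑ y, p x y) = 1 →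
      (∀ y, 0 < ∑ x, p x y) →
      η (Function.invFun ψ
          (∑ y, (∑ x, p x y) * ψ (F (fun x => p x y / ∑ x', p x' y)))) =
        (fun t => η (Function.invFun ψ (-t)))
          (∑ y, (∑ x, p x y) * (fun q => -(ψ ∘ F) q) (fun x => p x y / ∑ x', p x' y)) := by
  refine ⟨?_, (hψc.comp_continuousOn hF).neg, hψF.neg, ?_⟩
  · have hinv : StrictAnti (invFun ψ) := hψ.invFun_of_surjective hψb.surjective
    exact hη.comp (hinv.comp fun _ _ => neg_lt_neg)
  · intro p _ _ _
    simp only [comp_apply, mul_neg, Finset.sum_neg_distrib, neg_neg]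

/-- Let `F` be continuous on the probability simplex `Δ_𝒳`, `η` strictly
increasing and continuous, and `ψ` a strictly decreasing continuous bijection with `ψ∘F`
convex on `Δ_𝒳`. Then `η̃ : t ↦ η(ψ⁻¹(−t))` is strictly increasing, `F̃ := −(ψ∘F)` is
continuous and concave on `Δ_𝒳`, and for every joint distribution with strictly positive
marginal `p_Y`, the EPKNAVG conditional entropy `η(M_ψ[F(p_{X|Y}(·|Y))])` equals the
EAVG conditional entropy `η̃(Σ_y p_Y(y)·F̃(p_{X|Y}(·|y)))`. -/
theorem epknavg_eq_eavg_of_strictAnti {𝒳 𝒴 : Type*} [Fintype 𝒳] [Fintype 𝒴]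
    (F : (𝒳 → ℝ) → ℝ) (hF : ContinuousOn F (stdSimplex ℝ 𝒳))
    (η : ℝ → ℝ) (hη : StrictMono η) (hηc : Continuous η)
    (ψ : ℝ → ℝ) (hψ : StrictAnti ψ) (hψc : Continuous ψ) (hψb : Function.Bijective ψ)
    (hψF : ConvexOn ℝ (stdSimplex ℝ 𝒳) (ψ ∘ F)) :
    StrictMono (fun t => η (Function.invFun ψ (-t))) ∧
    ContinuousOn (fun q => -(ψ ∘ F) q) (stdSimplex ℝ 𝒳) ∧
    ConcaveOn ℝ (stdSimplex ℝ 𝒳) (fun q => -(ψ ∘ F) q) ∧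
    ∀ p : 𝒳 → 𝒴 → ℝ, (∀ x y, 0 ≤ p x y) → (∑ x, ∑ y, p x y) = 1 →
      (∀ y, 0 < ∑ x, p x y) →
      η (Function.invFun ψ
          (∑ y, (∑ x, p x y) * ψ (F (fun x => p x y / ∑ x', p x' y)))) =
        (fun t => η (Function.invFun ψ (-t)))
          (∑ y, (∑ x, p x y) * (fun q => -(ψ ∘ F) q) (fun x => p x y / ∑ x', p x' y)) :=
  epknavg_eq_eavg_of_strictAnti_general F hF η hη ψ hψ hψc hψb hψF
end

section
/- Let 𝒳 be a finite alphabet, 𝒜 a finite nonempty action set, g : 𝒳 × 𝒜 → ℝ a gain function, and let φ : ℝ → ℝ be a strictly increasing continuous bijection that is strictly concave. Then the map p ↦ V_{φ,g}(p) := max_{a∈𝒜} φ⁻¹(Σ_{x∈𝒳} p(x)·φ(g(x,a))) is convex on the probability simplex Δ_𝒳; equivalently, the (φ,g)-entropy H_{φ,g}(p) := −V_{φ,g}(p) is concave on Δ_𝒳 (core-concavity, CCV). -/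
/-- The generalized g-prior vulnerability of a distribution `p` on `𝒳`:
`V_{φ,g}(p) := max_{a∈𝒜} φ⁻¹(Σ_x p(x)·φ(g(x,a)))`, where `φinv` denotes the inverse
of `φ`. -/
noncomputable def Vprior {𝒳 𝒜 : Type*} [Fintype 𝒳] [Fintype 𝒜] [Nonempty 𝒜]
    (φ φinv : ℝ → ℝ) (g : 𝒳 → 𝒜 → ℝ) (p : 𝒳 → ℝ) : ℝ :=
  Finset.univ.sup' Finset.univ_nonempty fun a => φinv (∑ x, p x * φ (g x a))

/-- For a finite alphabet `𝒳`, finite nonempty action set `𝒜`, gain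
function `g`, and a strictly increasing continuous bijection `φ : ℝ → ℝ` that is strictly
concave, the map `p ↦ V_{φ,g}(p)` is convex on the probability simplex `Δ_𝒳`;
equivalently, the `(φ,g)`-entropy `H_{φ,g}(p) := −V_{φ,g}(p)` is concave on `Δ_𝒳` (CCV). -/
theorem Vprior_convexOn_of_strictConcave {𝒳 𝒜 : Type*} [Fintype 𝒳] [Fintype 𝒜]
    [Nonempty 𝒜]
    (g : 𝒳 → 𝒜 → ℝ) (φ : ℝ → ℝ)
    (hφ : StrictMono φ) (hφc : Continuous φ) (hφb : Function.Bijective φ)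
    (hφconc : StrictConcaveOn ℝ Set.univ φ) :
    ConvexOn ℝ (stdSimplex ℝ 𝒳) (Vprior φ (Function.invFun φ) g) ∧
    ConcaveOn ℝ (stdSimplex ℝ 𝒳) (fun p => -Vprior φ (Function.invFun φ) g p) := by
  have hri : Function.RightInverse (Function.invFun φ) φ :=
    Function.rightInverse_invFun hφb.surjective
  -- invFun φ is subadditive in the convex sense
  have hkey : ∀ (u v s t : ℝ), 0 ≤ s → 0 ≤ t → s + t = 1 →
      Function.invFun φ (s * u + t * v) ≤
        s * Function.invFun φ u + t * Function.invFun φ v := by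
    intro u v s t hs ht hst
    set a := Function.invFun φ u
    set b := Function.invFun φ v
    have h1 : s • φ a + t • φ b ≤ φ (s • a + t • b) :=
      hφconc.concaveOn.2 (Set.mem_univ a) (Set.mem_univ b) hs ht hst
    have h2 : s * u + t * v ≤ φ (s * a + t * b) := by
      simpa [a, b, hri u, hri v, smul_eq_mul] using h1
    have h3 : Function.invFun φ (s * u + t * v) ≤
        Function.invFun φ (φ (s * a + t * b)) := by
      have hmono : Monotone (Function.invFun φ) := by
        intro x y hxy
        rw [← hφ.le_iff_le, hri x, hri y]
        exact hxy
      exact hmono h2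
    rwa [Function.leftInverse_invFun hφb.injective (s * a + t * b)] at h3
  have hconv : ConvexOn ℝ (stdSimplex ℝ 𝒳) (Vprior φ (Function.invFun φ) g) := by
    refine ⟨convex_stdSimplex ℝ 𝒳, ?_⟩
    intro p hp q hq s t hs ht hst
    unfold Vprior
    apply Finset.sup'_le
    intro a _
    have hterm : Function.invFun φ (∑ x, (s • p + t • q) x * φ (g x a)) ≤
        s * Function.invFun φ (∑ x, p x * φ (g x a)) +
        t * Function.invFun φ (∑ x, q x * φ (g x a)) := by
      have hlin : (∑ x, (s • p + t • q) x * φ (g x a)) =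
          s * (∑ x, p x * φ (g x a)) + t * (∑ x, q x * φ (g x a)) := by
        simp [Finset.mul_sum, add_mul, mul_assoc, Finset.sum_add_distrib]
      rw [hlin]
      exact hkey _ _ s t hs ht hst
    refine hterm.trans (add_le_add ?_ ?_)
    · exact mul_le_mul_of_nonneg_left
        (Finset.le_sup' (fun a => Function.invFun φ (∑ x, p x * φ (g x a)))
          (Finset.mem_univ a)) hs
    · exact mul_le_mul_of_nonneg_left
        (Finset.le_sup' (fun a => Function.invFun φ (∑ x, q x * φ (g x a)))
          (Finset.mem_univ a)) ht
  exact ⟨hconv, hconv.neg⟩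
end

section
/- Let X, Y be random variables with joint distribution p_{X,Y} on finite alphabets 𝒳, 𝒴 such that the marginal p_X is strictly positive, let 𝒜 be a finite nonempty action set, g : 𝒳 × 𝒜 → ℝ a gain function, and let φ, ψ : ℝ → ℝ be strictly monotone continuous bijections. Then V_{φ,g}(X) ≤ V_{φ,ψ,g}(X|Y); equivalently, the pair (H_{φ,g}(X), H_{φ,ψ,g}(X|Y)) := (−V_{φ,g}(X), −V_{φ,ψ,g}(X|Y)) satisfies conditioning reduces entropy (CRE): H_{φ,ψ,g}(X|Y) ≤ H_{φ,g}(X). -/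
/-- For a joint distribution on finite alphabets with strictly positive
marginal `p_X`, a finite nonempty action set, a gain function `g`, and strictly monotone
continuous bijections `φ, ψ : ℝ → ℝ`, one has `V_{φ,g}(X) ≤ V_{φ,ψ,g}(X|Y)`;
equivalently, CRE holds: `H_{φ,ψ,g}(X|Y) ≤ H_{φ,g}(X)`. -/
theorem VBayes_CRE {𝒳 𝒴 𝒜 : Type*} [Fintype 𝒳] [Fintype 𝒴] [DecidableEq 𝒴]
    [Fintype 𝒜] [Nonempty 𝒜]
    (p : 𝒳 → 𝒴 → ℝ) (hp0 : ∀ x y, 0 ≤ p x y) (hp1 : ∑ x, ∑ y, p x y = 1)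
    (hpX : ∀ x, 0 < ∑ y, p x y)
    (g : 𝒳 → 𝒜 → ℝ) (φ ψ : ℝ → ℝ)
    (hφ : StrictMono φ ∨ StrictAnti φ) (hφc : Continuous φ) (hφb : Function.Bijective φ)
    (hψ : StrictMono ψ ∨ StrictAnti ψ) (hψc : Continuous ψ) (hψb : Function.Bijective ψ) :
    Vprior φ (Function.invFun φ) g (fun x => ∑ y, p x y) ≤
      VBayes p φ (Function.invFun φ) ψ (Function.invFun ψ) g := by
  apply Finset.sup'_le
  intro a _
  have key : ∀ x : 𝒳, (∑ y, (p x y / ∑ y', p x y') * ψ (g x a)) = ψ (g x a) := by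
    intro x
    rw [← Finset.sum_mul, ← Finset.sum_div, div_self (hpX x).ne', one_mul]
  calc Function.invFun φ (∑ x, (∑ y, p x y) * φ (g x a))
      = Function.invFun φ (∑ x, (∑ y, p x y) *
          φ (Function.invFun ψ (∑ y, (p x y / ∑ y', p x y') * ψ (g x ((fun _ => a) y))))) := by
        congr 1
        refine Finset.sum_congr rfl fun x _ => ?_
        rw [key x, Function.leftInverse_invFun hψb.injective]
    _ ≤ _ := by
        unfold VBayes
        exact Finset.le_sup' (fun δ : 𝒴 → 𝒜 => Function.invFun φ (∑ x, (∑ y, p x y) *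
          φ (Function.invFun ψ (∑ y, (p x y / ∑ y', p x y') * ψ (g x (δ y))))))
          (Finset.mem_univ (fun _ : 𝒴 => a))
end

section
/- Let 𝒳, 𝒴, 𝒵 be finite alphabets, let 𝒜 be a convex subset of a real vector space ℝ^n, let g : 𝒳 × 𝒜 → ℝ, and let ψ : ℝ → ℝ be strictly increasing such that a ↦ ψ(g(x,a)) is concave on 𝒜 for every x ∈ 𝒳. Let p_{X,Y,Z} be a joint distribution forming a Markov chain X − Y − Z with strictly positive marginals p_X and p_Y. Then for every x ∈ 𝒳 and every decision rule δ : 𝒵 → 𝒜, Σ_z p_{Z|X}(z|x)·ψ(g(x, δ(z))) ≤ Σ_y p_{Y|X}(y|x)·ψ(g(x, Σ_z p_{Z|Y}(z|y)·δ(z))). -/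
/-!
The Markov property `X − Y − Z` writes `p_{Z|X}(·|x)` as the mixture of the rows `p_{Z|Y}(·|y)`
with weights `p_{Y|X}(y|x)`; Jensen's inequality for the concave `a ↦ ψ(g(x,a))`, applied
row by row, then moves each conditional average of `δ` inside.
-/

open Finset

theorem ConcaveOn.sum_mixture_mul_map_le {ι κ E : Type*} [Fintype ι] [Fintype κ]
    [AddCommGroup E] [Module ℝ E] {s : Set E} {f : E → ℝ} (hf : ConcaveOn ℝ s f)
    {w : ι → ℝ} {q : ι → κ → ℝ} (hw : ∀ i, 0 ≤ w i) (hq₀ : ∀ i k, 0 ≤ q i k)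
    (hq₁ : ∀ i, ∑ k, q i k = 1) {v : κ → E} (hv : ∀ k, v k ∈ s) :
    ∑ k, (∑ i, w i * q i k) * f (v k) ≤ ∑ i, w i * f (∑ k, q i k • v k) :=
  calc ∑ k, (∑ i, w i * q i k) * f (v k) = ∑ i, w i * ∑ k, q i k • f (v k) := by
        simp_rw [sum_mul, mul_sum, smul_eq_mul, mul_assoc]
        exact sum_comm
    _ ≤ ∑ i, w i * f (∑ k, q i k • v k) := sum_le_sum fun i _ ↦
        mul_le_mul_of_nonneg_left
          (hf.le_map_sum (fun k _ ↦ hq₀ i k) (hq₁ i) fun k _ ↦ hv k) (hw i)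

theorem sum_eq_sum_mul_cond_of_markov {α β γ : Type*} [Fintype α] [Fintype β] [Fintype γ]
    {p : α → β → γ → ℝ} (hpY : ∀ y, ∑ x, ∑ z, p x y z ≠ 0)
    (hMarkov : ∀ x y z, p x y z * (∑ x', ∑ z', p x' y z') =
      (∑ z', p x y z') * (∑ x', p x' y z)) (x : α) (z : γ) :
    ∑ y, p x y z = ∑ y, (∑ z', p x y z') * ((∑ x', p x' y z) / ∑ x', ∑ z', p x' y z') :=
  sum_congr rfl fun y _ ↦ by
    rw [mul_div_assoc', eq_div_iff (hpY y), hMarkov]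

theorem conditional_jensen_markov_general {𝒳 𝒴 𝒵 : Type*} [Fintype 𝒳] [Fintype 𝒴] [Fintype 𝒵]
    {n : ℕ} (𝒜 : Set (Fin n → ℝ))
    (g : 𝒳 → (Fin n → ℝ) → ℝ)
    (ψ : ℝ → ℝ)
    (hgconc : ∀ x, ConcaveOn ℝ 𝒜 fun a => ψ (g x a))
    (p : 𝒳 → 𝒴 → 𝒵 → ℝ) (hp0 : ∀ x y z, 0 ≤ p x y z)
    (hpY : ∀ y, 0 < ∑ x, ∑ z, p x y z)
    (hMarkov : ∀ x y z, p x y z * (∑ x', ∑ z', p x' y z') =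
      (∑ z', p x y z') * (∑ x', p x' y z))
    (δ : 𝒵 → Fin n → ℝ) (hδ : ∀ z, δ z ∈ 𝒜) (x : 𝒳) :
    ∑ z, ((∑ y, p x y z) / (∑ y, ∑ z', p x y z')) * ψ (g x (δ z)) ≤
      ∑ y, ((∑ z, p x y z) / (∑ y', ∑ z', p x y' z')) *
        ψ (g x (∑ z, ((∑ x', p x' y z) / (∑ x', ∑ z', p x' y z')) • δ z)) := by
  have hmix : ∀ z, (∑ y, p x y z) / (∑ y, ∑ z', p x y z') =
      ∑ y, (∑ z', p x y z') / (∑ y, ∑ z', p x y z') *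
        ((∑ x', p x' y z) / ∑ x', ∑ z', p x' y z') := fun z ↦ by
    rw [sum_eq_sum_mul_cond_of_markov (fun y ↦ (hpY y).ne') hMarkov, sum_div]
    exact sum_congr rfl fun y _ ↦ (div_mul_eq_mul_div _ _ _).symm
  have hrow : ∀ y, ∑ z, (∑ x', p x' y z) / (∑ x', ∑ z', p x' y z') = 1 := fun y ↦ by
    rw [← sum_div, sum_comm, div_self (hpY y).ne']
  simp_rw [hmix]
  exact (hgconc x).sum_mixture_mul_map_le
    (fun y ↦ div_nonneg (sum_nonneg fun z _ ↦ hp0 x y z)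
      (sum_nonneg fun y _ ↦ sum_nonneg fun z _ ↦ hp0 x y z))
    (fun y z ↦ div_nonneg (sum_nonneg fun x' _ ↦ hp0 x' y z)
      (sum_nonneg fun x' _ ↦ sum_nonneg fun z' _ ↦ hp0 x' y z'))
    hrow hδ

/-- Let `𝒜 ⊆ ℝⁿ` be convex, `g : 𝒳 × 𝒜 → ℝ`, and `ψ : ℝ → ℝ` strictly
increasing with `a ↦ ψ(g(x,a))` concave on `𝒜` for every `x`. If `p_{X,Y,Z}` forms a
Markov chain `X − Y − Z` with strictly positive marginals `p_X`, `p_Y`, then for every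
`x` and every decision rule `δ : 𝒵 → 𝒜`,
`Σ_z p_{Z|X}(z|x)·ψ(g(x,δ(z))) ≤ Σ_y p_{Y|X}(y|x)·ψ(g(x, Σ_z p_{Z|Y}(z|y)·δ(z)))`. -/
theorem conditional_jensen_markov {𝒳 𝒴 𝒵 : Type*} [Fintype 𝒳] [Fintype 𝒴] [Fintype 𝒵]
    {n : ℕ} (𝒜 : Set (Fin n → ℝ)) (hA : Convex ℝ 𝒜)
    (g : 𝒳 → (Fin n → ℝ) → ℝ)
    (ψ : ℝ → ℝ) (hψ : StrictMono ψ)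
    (hgconc : ∀ x, ConcaveOn ℝ 𝒜 fun a => ψ (g x a))
    (p : 𝒳 → 𝒴 → 𝒵 → ℝ) (hp0 : ∀ x y z, 0 ≤ p x y z)
    (hp1 : ∑ x, ∑ y, ∑ z, p x y z = 1)
    (hpX : ∀ x, 0 < ∑ y, ∑ z, p x y z) (hpY : ∀ y, 0 < ∑ x, ∑ z, p x y z)
    (hMarkov : ∀ x y z, p x y z * (∑ x', ∑ z', p x' y z') =
      (∑ z', p x y z') * (∑ x', p x' y z))
    (δ : 𝒵 → Fin n → ℝ) (hδ : ∀ z, δ z ∈ 𝒜) (x : 𝒳) :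
    ∑ z, ((∑ y, p x y z) / (∑ y, ∑ z', p x y z')) * ψ (g x (δ z)) ≤
      ∑ y, ((∑ z, p x y z) / (∑ y', ∑ z', p x y' z')) *
        ψ (g x (∑ z, ((∑ x', p x' y z) / (∑ x', ∑ z', p x' y z')) • δ z)) :=
  conditional_jensen_markov_general 𝒜 g ψ hgconc p hp0 hpY hMarkov δ hδ x
end

section
/- Let X, Y be random variables with joint distribution p_{X,Y} on finite alphabets 𝒳, 𝒴 such that both marginals p_X and p_Y are strictly positive, let 𝒜 be a finite nonempty action set, let g : 𝒳 × 𝒜 → ℝ be a gain function, and let φ : ℝ → ℝ be a strictly monotone continuous bijection. Then the generalized average g-posterior conditional vulnerability and the generalized g-Bayes conditional vulnerability with ψ = φ coincide: V̂_{φ,φ,g}(X|Y) = V_{φ,φ,g}(X|Y). -/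
/-!
Both vulnerabilities are Kolmogorov–Nagumo means of the same generating function `φ`, so the
inner `φ⁻¹` of a nested mean cancels against the outer `φ`: averaging first over `Y` given `X` and
then over `X` is the `φ`-mean of `g(X, δ(Y))` under the joint law, which is also obtained by
averaging first over `X` given `Y` and then over `Y`. A KN mean with nonnegative weights is
monotone in its argument whether `φ` increases or decreases, so the best decision rule picks, for
each `y` separately, an action maximising the posterior mean; hence maximising over rules commutes
with the outer mean over `Y`.
-/

open Finset

/-- The paper's `M_φ[Z]`, with `φinv = φ⁻¹`, `w` the law of the index and `z` the values of `Z`. -/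
noncomputable def knMean {ι : Type*} [Fintype ι] (φ φinv : ℝ → ℝ) (w z : ι → ℝ) : ℝ :=
  φinv (∑ i, w i * φ (z i))

section KNMean

variable {ι κ : Type*} [Fintype ι] [Fintype κ] {φ φinv : ℝ → ℝ}

theorem knMean_mono (hφ : StrictMono φ ∨ StrictAnti φ) (hinv : Function.RightInverse φinv φ)
    {w z z' : ι → ℝ} (hw : 0 ≤ w) (hz : z ≤ z') :
    knMean φ φinv w z ≤ knMean φ φinv w z' := by
  rcases hφ with hφ | hφ
  · have hinv_mono : Monotone φinv := fun a b hab => hφ.le_iff_le.mp (by rwa [hinv a, hinv b])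
    exact hinv_mono <| sum_le_sum fun i _ =>
      mul_le_mul_of_nonneg_left (hφ.monotone (hz i)) (hw i)
  · have hinv_anti : Antitone φinv := fun a b hab => hφ.le_iff_ge.mp (by rwa [hinv a, hinv b])
    exact hinv_anti <| sum_le_sum fun i _ =>
      mul_le_mul_of_nonneg_left (hφ.antitone (hz i)) (hw i)

theorem knMean_marginal_knMean_cond (hinv : Function.RightInverse φinv φ) (p : ι → κ → ℝ)
    (hp : ∀ i, ∑ j, p i j ≠ 0) (z : ι → κ → ℝ) :
    knMean φ φinv (fun i => ∑ j, p i j)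
        (fun i => knMean φ φinv (fun j => p i j / ∑ j', p i j') (z i)) =
      φinv (∑ i, ∑ j, p i j * φ (z i j)) := by
  unfold knMean
  congr 1
  refine sum_congr rfl fun i _ => ?_
  rw [hinv, mul_sum]
  refine sum_congr rfl fun j _ => ?_
  field_simp [hp i]

theorem knMean_marginal_knMean_cond_comm (hinv : Function.RightInverse φinv φ) (p : ι → κ → ℝ)
    (hpι : ∀ i, ∑ j, p i j ≠ 0) (hpκ : ∀ j, ∑ i, p i j ≠ 0) (z : ι → κ → ℝ) :
    knMean φ φinv (fun i => ∑ j, p i j)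
        (fun i => knMean φ φinv (fun j => p i j / ∑ j', p i j') (z i)) =
      knMean φ φinv (fun j => ∑ i, p i j)
        (fun j => knMean φ φinv (fun i => p i j / ∑ i', p i' j) (fun i => z i j)) := by
  rw [knMean_marginal_knMean_cond hinv p hpι,
    knMean_marginal_knMean_cond hinv (fun j i => p i j) hpκ, sum_comm]

theorem sup'_knMean_eq_knMean_sup' {𝒜 : Type*} [DecidableEq ι] [Fintype 𝒜] [Nonempty 𝒜]
    (hφ : StrictMono φ ∨ StrictAnti φ) (hinv : Function.RightInverse φinv φ) {w : ι → ℝ}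
    (hw : 0 ≤ w) (u : ι → 𝒜 → ℝ) :
    (univ.sup' univ_nonempty fun δ : ι → 𝒜 => knMean φ φinv w fun i => u i (δ i)) =
      knMean φ φinv w fun i => univ.sup' univ_nonempty (u i) := by
  refine le_antisymm (sup'_le _ _ fun δ _ =>
    knMean_mono hφ hinv hw fun i => le_sup' (u i) (mem_univ (δ i))) ?_
  choose δ _ hδ using fun i => exists_mem_eq_sup' univ_nonempty (u i)
  calc knMean φ φinv w (fun i => univ.sup' univ_nonempty (u i))
      = knMean φ φinv w fun i => u i (δ i) := by simp only [hδ]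
    _ ≤ _ := le_sup' (fun δ : ι → 𝒜 => knMean φ φinv w fun i => u i (δ i)) (mem_univ δ)

end KNMean

theorem Vhat_eq_VBayes_of_eq_means_general {𝒳 𝒴 𝒜 : Type*} [Fintype 𝒳] [Fintype 𝒴]
    [DecidableEq 𝒴] [Fintype 𝒜] [Nonempty 𝒜]
    (p : 𝒳 → 𝒴 → ℝ)
    (hpX : ∀ x, 0 < ∑ y, p x y) (hpY : ∀ y, 0 < ∑ x, p x y)
    (g : 𝒳 → 𝒜 → ℝ) (φ : ℝ → ℝ)
    (hφ : StrictMono φ ∨ StrictAnti φ) (hφb : Function.Bijective φ) :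
    Vhat p φ (Function.invFun φ) φ (Function.invFun φ) g =
      VBayes p φ (Function.invFun φ) φ (Function.invFun φ) g := by
  have hinv : Function.RightInverse (Function.invFun φ) φ :=
    Function.rightInverse_invFun hφb.surjective
  set posteriorMean : 𝒴 → 𝒜 → ℝ := fun y a =>
    knMean φ (Function.invFun φ) (fun x => p x y / ∑ x', p x' y) fun x => g x a
  calc Vhat p φ (Function.invFun φ) φ (Function.invFun φ) g
      = knMean φ (Function.invFun φ) (fun y => ∑ x, p x y)
          fun y => univ.sup' univ_nonempty (posteriorMean y) := rfl
    _ = univ.sup' univ_nonempty fun δ : 𝒴 → 𝒜 =>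
          knMean φ (Function.invFun φ) (fun y => ∑ x, p x y) fun y => posteriorMean y (δ y) :=
      (sup'_knMean_eq_knMean_sup' hφ hinv (fun y => (hpY y).le) posteriorMean).symm
    _ = VBayes p φ (Function.invFun φ) φ (Function.invFun φ) g := by
      unfold VBayes
      refine sup'_congr univ_nonempty rfl fun δ _ => ?_
      exact (knMean_marginal_knMean_cond_comm hinv p (fun x => (hpX x).ne')
        (fun y => (hpY y).ne') fun x y => g x (δ y)).symm

/-- For a joint distribution on finite alphabets with strictly positive
marginals `p_X` and `p_Y`, a finite nonempty action set, a gain function `g`, and a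
strictly monotone continuous bijection `φ : ℝ → ℝ`, the generalized average g-posterior
conditional vulnerability and the generalized g-Bayes conditional vulnerability with
`ψ = φ` coincide: `V̂_{φ,φ,g}(X|Y) = V_{φ,φ,g}(X|Y)`. -/
theorem Vhat_eq_VBayes_of_eq_means {𝒳 𝒴 𝒜 : Type*} [Fintype 𝒳] [Fintype 𝒴]
    [DecidableEq 𝒴] [Fintype 𝒜] [Nonempty 𝒜]
    (p : 𝒳 → 𝒴 → ℝ) (hp0 : ∀ x y, 0 ≤ p x y) (hp1 : ∑ x, ∑ y, p x y = 1)
    (hpX : ∀ x, 0 < ∑ y, p x y) (hpY : ∀ y, 0 < ∑ x, p x y)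
    (g : 𝒳 → 𝒜 → ℝ) (φ : ℝ → ℝ)
    (hφ : StrictMono φ ∨ StrictAnti φ) (hφc : Continuous φ) (hφb : Function.Bijective φ) :
    Vhat p φ (Function.invFun φ) φ (Function.invFun φ) g =
      VBayes p φ (Function.invFun φ) φ (Function.invFun φ) g :=
  Vhat_eq_VBayes_of_eq_means_general p hpX hpY g φ hφ hφb
end
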